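/- For all real numbers x, y, s₀, s₁ with 1 ≤ y < x ≤ 2^{n−1} and writing f(t) = (1/t)log₂(2^{n−1}/t), the inequality f(x)·s₀² + f(y)·s₁² + (s₀ − s₁)²/x ≥ (1/2)·f((x+y)/2)·(s₀+s₁)² holds. -/
import Mathlib

/-- `ln(1+t) ≥ t ln 2` for `t ∈ [0,1]`, via convexity of `exp`. -/
lemma aux_log_ineq (t : ℝ) (h0 : 0 ≤ t) (h1 : t ≤ 1) :
    t * Real.log 2 ≤ Real.log (1 + t) := by
  have h2 : Real.exp (t * Real.log 2) ≤ 1 + t := by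
    have hc := convexOn_exp.2 (Set.mem_univ (0:ℝ)) (Set.mem_univ (Real.log 2))
      (by linarith : (0:ℝ) ≤ 1 - t) h0 (by ring)
    simp only [smul_eq_mul, mul_zero, zero_add, Real.exp_zero, mul_one,
      Real.exp_log two_pos] at hc
    linarith
  calc t * Real.log 2 = Real.log (Real.exp (t * Real.log 2)) := (Real.log_exp _).symm
    _ ≤ Real.log (1 + t) := Real.log_le_log (Real.exp_pos _) h2

/-- Core quadratic-form inequality. -/
lemma core_quad (x y u v Lx Ly M P Q R : ℝ) (hx : 0 < x) (hy : 0 < y)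
    (hu : 0 ≤ u) (hv : 0 ≤ v) (hM : 0 ≤ M) (hP : 0 ≤ P) (hQ : 0 ≤ Q)
    (hPdef : P = Ly - M) (hQdef : Q = M - Lx) (hQR : Q + R = 1)
    (hxR : y ≤ x * R) (hdet : y * Q ≤ x * P * R) :
    (1 / 2) * ((1 / ((x + y) / 2)) * M) * (u + v) ^ 2 ≤
      (1 / x) * Lx * u ^ 2 + (1 / y) * Ly * v ^ 2 + (u - v) ^ 2 / x := by
  have hxy : 0 < x + y := by linarith
  have hlhs : (1 / 2) * ((1 / ((x + y) / 2)) * M) * (u + v) ^ 2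
      = M * (u + v) ^ 2 / (x + y) := by
    field_simp
  rw [hlhs]
  have cauchy : (u + v) ^ 2 / (x + y) ≤ u ^ 2 / x + v ^ 2 / y := by
    rw [div_add_div _ _ (ne_of_gt hx) (ne_of_gt hy),
      div_le_div_iff₀ hxy (by positivity)]
    nlinarith [sq_nonneg (y * u - x * v)]
  have ha : M * (u + v) ^ 2 / (x + y) ≤ M * (u ^ 2 / x + v ^ 2 / y) := by
    rw [mul_div_assoc]
    exact mul_le_mul_of_nonneg_left cauchy hM
  -- the key quadratic form
  have hB : 0 < y + x * P := by positivity
  have hABE : 0 ≤ y * (x * P * (1 - Q) - y * Q) := by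
    have : x * P * (1 - Q) - y * Q = x * P * R - y * Q := by
      have : R = 1 - Q := by linarith
      rw [this]
    rw [this]
    exact mul_nonneg hy.le (by linarith)
  have key : 0 ≤ (y * (1 - Q)) * u ^ 2 - 2 * y * u * v + (y + x * P) * v ^ 2 := by
    have hexp : (y + x * P) *
        ((y * (1 - Q)) * u ^ 2 - 2 * y * u * v + (y + x * P) * v ^ 2)
        = (y * (x * P * (1 - Q) - y * Q)) * u ^ 2 + (y * u - (y + x * P) * v) ^ 2 := by
      ring
    nlinarith [sq_nonneg (y * u - (y + x * P) * v), mul_nonneg hABE (sq_nonneg u)]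
  have hquad : Q * u ^ 2 / x ≤ (u - v) ^ 2 / x + P * v ^ 2 / y := by
    rw [div_add_div _ _ (ne_of_gt hx) (ne_of_gt hy),
      div_le_div_iff₀ hx (by positivity)]
    nlinarith [mul_nonneg hx.le key]
  have hb : M * (u ^ 2 / x + v ^ 2 / y) ≤
      (1 / x) * Lx * u ^ 2 + (1 / y) * Ly * v ^ 2 + (u - v) ^ 2 / x := by
    have e1 : M * (u ^ 2 / x + v ^ 2 / y)
        = (1 / x) * Lx * u ^ 2 + (1 / y) * Ly * v ^ 2
          + (Q * u ^ 2 / x - P * v ^ 2 / y) := by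
      rw [hPdef, hQdef]; field_simp; ring
    rw [e1]
    linarith [hquad]
  linarith

/-- Key inequality for the induction step: with `f(t) = (1/t)·log₂(2^{n-1}/t)` and
`1 ≤ y < x ≤ 2^{n-1}`,
`f(x)·s₀² + f(y)·s₁² + (s₀-s₁)²/x ≥ (1/2)·f((x+y)/2)·(s₀+s₁)²`. -/
theorem induction_step_ineq (n : ℕ) (hn : 2 ≤ n) (x y s₀ s₁ : ℝ)
    (hy : 1 ≤ y) (hxy : y < x) (hx : x ≤ (2 : ℝ) ^ (n - 1)) :
    (1 / x) * Real.logb 2 ((2 : ℝ) ^ (n - 1) / x) * s₀ ^ 2 +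
        (1 / y) * Real.logb 2 ((2 : ℝ) ^ (n - 1) / y) * s₁ ^ 2 +
        (s₀ - s₁) ^ 2 / x ≥
      (1 / 2) * ((1 / ((x + y) / 2)) * Real.logb 2 ((2 : ℝ) ^ (n - 1) / ((x + y) / 2))) *
        (s₀ + s₁) ^ 2 := by
  set N : ℝ := (2 : ℝ) ^ (n - 1) with hN
  have hN0 : 0 < N := by positivity
  have hy0 : 0 < y := lt_of_lt_of_le one_pos hy
  have hx0 : 0 < x := lt_trans hy0 hxy
  have hxy0 : 0 < x + y := by linarith
  have hyN : y ≤ N := le_of_lt (lt_of_lt_of_le hxy hx)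
  have hmN : (x + y) / 2 ≤ N := by linarith
  have hm0 : 0 < (x + y) / 2 := by linarith
  set Lx : ℝ := Real.logb 2 (N / x) with hLx
  set Ly : ℝ := Real.logb 2 (N / y) with hLy
  set M : ℝ := Real.logb 2 (N / ((x + y) / 2)) with hM
  set P : ℝ := Real.logb 2 ((x + y) / (2 * y)) with hP
  set Q : ℝ := Real.logb 2 (2 * x / (x + y)) with hQ
  set R : ℝ := Real.logb 2 ((x + y) / x) with hR
  have h1lt2 : (1 : ℝ) < 2 := one_lt_two
  -- identities
  have hQdef : Q = M - Lx := by
    rw [hQ, hM, hLx, ← Real.logb_div (by positivity) (by positivity)]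
    congr 1
    field_simp
  have hPdef : P = Ly - M := by
    rw [hP, hM, hLy, ← Real.logb_div (by positivity) (by positivity)]
    congr 1
    field_simp
  have hQR : Q + R = 1 := by
    rw [hQ, hR, ← Real.logb_mul (by positivity) (by positivity)]
    have h2 : 2 * x / (x + y) * ((x + y) / x) = 2 := by field_simp
    rw [h2, Real.logb_self_eq_one h1lt2]
  -- nonnegativity facts
  have hM0 : 0 ≤ M := Real.logb_nonneg h1lt2 ((one_le_div hm0).2 hmN)
  have hQ0 : 0 ≤ Q := Real.logb_nonneg h1lt2
    ((one_le_div hxy0).2 (by linarith))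
  have hPQ : Q ≤ P := by
    have harg : 2 * x / (x + y) ≤ (x + y) / (2 * y) := by
      rw [div_le_div_iff₀ hxy0 (by positivity)]
      nlinarith [sq_nonneg (x - y)]
    rw [hP, hQ]
    exact (Real.logb_le_logb h1lt2 (by positivity) (by positivity)).2 harg
  have hP0 : 0 ≤ P := le_trans hQ0 hPQ
  -- key: y ≤ x * R
  have hxR : y ≤ x * R := by
    have ht := aux_log_ineq (y / x) (by positivity)
      (by rw [div_le_one hx0]; linarith)
    have h2 : (1 : ℝ) + y / x = (x + y) / x := by field_simp
    rw [h2] at ht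
    have hlog2 : 0 < Real.log 2 := Real.log_pos h1lt2
    have hRval : R = Real.log ((x + y) / x) / Real.log 2 := by
      rw [hR, Real.logb]
    rw [hRval, ← mul_div_assoc, le_div_iff₀ hlog2]
    have hmul := mul_le_mul_of_nonneg_left ht hx0.le
    calc y * Real.log 2 = x * (y / x * Real.log 2) := by field_simp
      _ ≤ x * Real.log ((x + y) / x) := hmul
  have hdet : y * Q ≤ x * P * R := by
    have hR0 : 0 ≤ R := Real.logb_nonneg h1lt2 ((one_le_div hx0).2 (by linarith))
    calc y * Q ≤ y * P := mul_le_mul_of_nonneg_left hPQ hy0.le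
      _ ≤ (x * R) * P := mul_le_mul_of_nonneg_right hxR hP0
      _ = x * P * R := by ring
  -- reduce to |s₀|, |s₁|
  set u : ℝ := |s₀| with hu
  set v : ℝ := |s₁| with hv
  have hu2 : s₀ ^ 2 = u ^ 2 := (sq_abs s₀).symm
  have hv2 : s₁ ^ 2 = v ^ 2 := (sq_abs s₁).symm
  have hsub : (u - v) ^ 2 ≤ (s₀ - s₁) ^ 2 := by
    have h := abs_abs_sub_abs_le_abs_sub s₀ s₁
    calc (u - v) ^ 2 = |u - v| ^ 2 := (sq_abs _).symm
      _ ≤ |s₀ - s₁| ^ 2 := by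
          apply pow_le_pow_left₀ (abs_nonneg _) h
      _ = (s₀ - s₁) ^ 2 := sq_abs _
  have hadd : (s₀ + s₁) ^ 2 ≤ (u + v) ^ 2 := by
    calc (s₀ + s₁) ^ 2 = |s₀ + s₁| ^ 2 := (sq_abs _).symm
      _ ≤ (u + v) ^ 2 := by
          apply pow_le_pow_left₀ (abs_nonneg _) (abs_add_le s₀ s₁)
  have hcore := core_quad x y u v Lx Ly M P Q R hx0 hy0 (abs_nonneg _)
    (abs_nonneg _) hM0 hP0 hQ0 hPdef hQdef hQR hxR hdet
  have hcoeff : 0 ≤ (1 / 2) * ((1 / ((x + y) / 2)) * M) := by positivity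
  have hrhs : (1 / 2) * ((1 / ((x + y) / 2)) * M) * (s₀ + s₁) ^ 2 ≤
      (1 / 2) * ((1 / ((x + y) / 2)) * M) * (u + v) ^ 2 :=
    mul_le_mul_of_nonneg_left hadd hcoeff
  have hsubx : (u - v) ^ 2 / x ≤ (s₀ - s₁) ^ 2 / x := by gcongr
  rw [ge_iff_le, hu2, hv2]
  linarith
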